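/- arXiv:2212.10518 — 2 statements merged into one kernel-verified Lean document; each statement's English description precedes it below -/
import Mathlib

section
/- Let d₁, d₂ ≥ 2 be coprime integers, neither congruent to 0 mod 4, and a₁, a₂ nonzero elements of F_q. Then x^{d₁d₂} - a₁^{d₂} a₂^{d₁} is irreducible over F_q if and only if both x^{d₁} - a₁ and x^{d₂} - a₂ are irreducible over F_q. -/
open Polynomial

/-- `iter f n` is the n-th iterate of `f` under composition, with `iter f 0 = X`. -/
noncomputable def iter {F : Type*} [Field F] (f : F[X]) : ℕ → F[X]
  | 0 => X
  | n + 1 => (iter f n).comp f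

/-- `P d a n` is the value `P_n(a)` where `P_1(x) = x` and
`P_n(x) = P_{n-1}(x)^d + (-1)^(d-1) x` for `n ≥ 2`. (`P d a 0` is junk, set to `a`.) -/
def P {F : Type*} [Field F] (d : ℕ) (a : F) : ℕ → F
  | 0 => a
  | 1 => a
  | n + 2 => (P d a (n + 1)) ^ d + (-1 : F) ^ (d - 1) * a

/-!
By Capelli's theorem, when `4 ∤ n` the binomial `X ^ n - a` is irreducible iff `a` is not a
`p`-th power for any prime `p ∣ n`. Since `4 ∤ d₁` and `4 ∤ d₂` are coprime, `4 ∤ d₁ d₂`, and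
every prime `p ∣ d₁ d₂` divides exactly one of them, say `d₁`. Then `a₂ ^ d₁` is a `p`-th power
and `d₂` is invertible mod `p`, so `a₁ ^ d₂ a₂ ^ d₁` is a `p`-th power iff `a₁` is.
-/

theorem Nat.not_four_dvd_mul {m n : ℕ} (hmn : m.Coprime n) (hm : ¬ 4 ∣ m) (hn : ¬ 4 ∣ n) :
    ¬ 4 ∣ m * n := by
  have coprime_four_of_odd {k : ℕ} (hk : Odd k) : Nat.Coprime 4 k :=
    (Nat.coprime_two_left.mpr hk).pow_left 2
  intro h
  rcases Nat.even_or_odd m with hm2 | hm2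
  · have hn2 : Odd n := Nat.coprime_two_left.mp (hmn.coprime_dvd_left hm2.two_dvd)
    exact hm ((coprime_four_of_odd hn2).dvd_of_dvd_mul_right h)
  · exact hn ((coprime_four_of_odd hm2).dvd_of_dvd_mul_left h)

theorem Nat.forall_prime_dvd_mul_iff {m n : ℕ} {P : ℕ → Prop} :
    (∀ p, p.Prime → p ∣ m * n → P p) ↔
      (∀ p, p.Prime → p ∣ m → P p) ∧ (∀ p, p.Prime → p ∣ n → P p) :=
  ⟨fun h ↦ ⟨fun p hp hpm ↦ h p hp (hpm.mul_right n), fun p hp hpn ↦ h p hp (hpn.mul_left m)⟩,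
    fun ⟨hm, hn⟩ p hp hpmn ↦ (hp.dvd_mul.mp hpmn).elim (hm p hp) (hn p hp)⟩

section PowerRange

variable {G₀ : Type*} [CommGroupWithZero G₀]

theorem pow_mul_pow_mem_range_pow_iff {p e : ℕ} (hep : e.Coprime p) {x y : G₀} (hy : y ≠ 0) :
    x ^ e * y ^ p ∈ Set.range (· ^ p : G₀ → G₀) ↔ x ∈ Set.range (· ^ p : G₀ → G₀) := by
  rw [← pow_mem_range_pow_of_coprime hep x]
  constructor
  · rintro ⟨c, hc⟩
    exact ⟨c / y, by simp only [div_pow, hc, mul_div_cancel_right₀ _ (pow_ne_zero p hy)]⟩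
  · rintro ⟨c, hc⟩
    exact ⟨c * y, by simp only [mul_pow, hc]⟩

theorem pow_mul_pow_mem_range_pow_iff_of_dvd {d₁ d₂ p : ℕ} (hcop : d₁.Coprime d₂) (hpd : p ∣ d₁)
    {a₁ a₂ : G₀} (ha₂ : a₂ ≠ 0) :
    a₁ ^ d₂ * a₂ ^ d₁ ∈ Set.range (· ^ p : G₀ → G₀) ↔ a₁ ∈ Set.range (· ^ p : G₀ → G₀) := by
  obtain ⟨k, rfl⟩ := hpd
  rw [pow_mul']
  exact pow_mul_pow_mem_range_pow_iff (hcop.coprime_dvd_left (dvd_mul_right p k)).symm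
    (pow_ne_zero k ha₂)

end PowerRange

section Capelli

variable {K : Type*} [Field K]

theorem X_pow_two_mul_sub_C_irreducible_of_odd {m : ℕ} (hm : Odd m) {a : K}
    (ha : ∀ p : ℕ, p.Prime → p ∣ 2 * m → ∀ b : K, b ^ p ≠ a) :
    Irreducible (X ^ (2 * m) - C a) := by
  rw [mul_comm]
  apply X_pow_mul_sub_C_irreducible
    (X_pow_sub_C_irreducible_of_prime Nat.prime_two (ha 2 Nat.prime_two (dvd_mul_right 2 m)))
  intro E _ _ x hx
  have hx_int : IsIntegral K x :=
    not_not.mp fun h ↦ X_pow_sub_C_ne_zero two_pos a (hx ▸ minpoly.eq_zero h)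
  have hnorm : Algebra.norm K (IntermediateField.AdjoinSimple.gen K x) = -a := by
    rw [← IntermediateField.adjoin.powerBasis_gen hx_int,
      Algebra.PowerBasis.norm_gen_eq_coeff_zero_minpoly]
    simp [IntermediateField.minpoly_gen, hx]
  apply X_pow_sub_C_irreducible_of_odd hm
  intro p hp hpm b hb
  have hp_odd : Odd p := hm.of_dvd_nat hpm
  -- A `p`-th root `b` of `√a` in `K(√a)` would give `(-N b) ^ p = -N(√a) = a`, as `p` is odd.
  apply ha p hp (hpm.mul_left 2) (-Algebra.norm K b)
  rw [hp_odd.neg_pow, ← map_pow, hb, hnorm, neg_neg]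

theorem X_pow_sub_C_irreducible_iff_of_not_four_dvd {n : ℕ} (hn : ¬ 4 ∣ n) {a : K} :
    Irreducible (X ^ n - C a) ↔ ∀ p : ℕ, p.Prime → p ∣ n → ∀ b : K, b ^ p ≠ a := by
  refine ⟨fun h p hp hpn ↦ pow_ne_of_irreducible_X_pow_sub_C h hpn hp.ne_one, fun ha ↦ ?_⟩
  rcases Nat.even_or_odd' n with ⟨m, rfl | rfl⟩
  · have hm : Odd m := Nat.odd_iff.mpr (by omega)
    exact X_pow_two_mul_sub_C_irreducible_of_odd hm ha
  · exact X_pow_sub_C_irreducible_of_odd (odd_two_mul_add_one m) ha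

end Capelli

theorem stmt15_general (d₁ d₂ : ℕ)
    (hcop : Nat.gcd d₁ d₂ = 1) (hd₁4 : ¬ (4 ∣ d₁)) (hd₂4 : ¬ (4 ∣ d₂))
    (F : Type*) [Field F]
    (a₁ a₂ : F) (ha₁ : a₁ ≠ 0) (ha₂ : a₂ ≠ 0) :
    Irreducible (X ^ (d₁ * d₂) - C (a₁ ^ d₂ * a₂ ^ d₁) : F[X]) ↔
      (Irreducible (X ^ d₁ - C a₁ : F[X]) ∧ Irreducible (X ^ d₂ - C a₂ : F[X])) := by
  rw [X_pow_sub_C_irreducible_iff_of_not_four_dvd (Nat.not_four_dvd_mul hcop hd₁4 hd₂4),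
    X_pow_sub_C_irreducible_iff_of_not_four_dvd hd₁4,
    X_pow_sub_C_irreducible_iff_of_not_four_dvd hd₂4, Nat.forall_prime_dvd_mul_iff]
  refine and_congr (forall₂_congr fun p _ ↦ forall_congr' fun hpd ↦ ?_)
    (forall₂_congr fun p _ ↦ forall_congr' fun hpd ↦ ?_)
  · simpa using not_congr (pow_mul_pow_mem_range_pow_iff_of_dvd hcop hpd ha₂)
  · rw [mul_comm]
    simpa using not_congr (pow_mul_pow_mem_range_pow_iff_of_dvd (Nat.Coprime.symm hcop) hpd ha₁)

theorem stmt15 (q d₁ d₂ : ℕ) (hd₁ : 2 ≤ d₁) (hd₂ : 2 ≤ d₂)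
    (hcop : Nat.gcd d₁ d₂ = 1) (hd₁4 : ¬ (4 ∣ d₁)) (hd₂4 : ¬ (4 ∣ d₂))
    (F : Type*) [Field F] [Fintype F] (hF : Fintype.card F = q)
    (a₁ a₂ : F) (ha₁ : a₁ ≠ 0) (ha₂ : a₂ ≠ 0) :
    Irreducible (X ^ (d₁ * d₂) - C (a₁ ^ d₂ * a₂ ^ d₁) : F[X]) ↔
      (Irreducible (X ^ d₁ - C a₁ : F[X]) ∧ Irreducible (X ^ d₂ - C a₂ : F[X])) :=
  stmt15_general d₁ d₂ hcop hd₁4 hd₂4 F a₁ a₂ ha₁ ha₂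
end

section
/- Let d ≥ 2 with d not congruent to 0 mod 4, f(x) = x^d - a over F_q with a ≠ 0, and P_n as defined. Let n₀ < m₀ be the minimal pair of integers with P_{n₀}(a) = P_{m₀}(a). Then f is stable over F_q (all iterates f_n are irreducible) if and only if for every prime l dividing d and every k in {1, ..., m₀ - 1}, P_k(a) is neither 0 nor an l-th power in F_q^*. -/
open Polynomial

/-!
Write `f = X ^ d - a`, `q = #F` and `f_n` for the iterates. If some prime `l ∣ d` does not
divide `q - 1`, every element of `F` is an `l`-th power, so `f_1 = f` is reducible and
`P_1(a) = a` is an `l`-th power: both sides fail. Otherwise let `h = f_n` be irreducible of degree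
`m` with a root `β`. By Capelli's lemma `f_{n+1} = h ∘ f` is irreducible iff `X ^ d - (a + β)` is
irreducible over `K = F(β)`; as `4 ∤ d` and every prime `l ∣ d` divides `#K - 1`, this means
that `a + β` is not an `l`-th power in `K` for any such `l`. The norm `N : K → F` is
`x ↦ x ^ ((#K - 1) / (q - 1))`, so comparing Euler's criteria in `K` and in `F` shows that `x` is
an `l`-th power in `K` iff `N x` is one in `F`, and `N (a + β) = (-1) ^ m h(-a) = P_{n+1}(a)`.
Hence all `f_n` are irreducible iff no `P_k(a)`, `k ≥ 1`, is an `l`-th power, and the values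
`P_k(a)` all occur among `P_1(a), …, P_{m₀-1}(a)` because the sequence repeats from `n₀` on.
-/

open IntermediateField Module

theorem IsCyclic.exists_pow_eq_iff_pow_eq_one {G : Type*} [Group G] [IsCyclic G] [Finite G]
    {l k : ℕ} (hG : Nat.card G = l * k) (x : G) : (∃ y, y ^ l = x) ↔ x ^ k = 1 := by
  constructor
  · rintro ⟨y, rfl⟩
    rw [← pow_mul, ← hG, pow_card_eq_one']
  · intro hx
    obtain ⟨g, hg⟩ := IsCyclic.exists_generator (α := G)
    obtain ⟨t, rfl⟩ : ∃ t : ℕ, g ^ t = x := by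
      rw [← Submonoid.mem_powers_iff, mem_powers_iff_mem_zpowers]
      exact hg x
    have hk : 0 < k := Nat.pos_of_mul_pos_left (hG ▸ Nat.card_pos)
    have hdvd : l * k ∣ t * k := by
      rw [← hG, ← orderOf_eq_card_of_forall_mem_zpowers hg]
      exact orderOf_dvd_of_pow_eq_one (by rwa [pow_mul])
    obtain ⟨s, rfl⟩ := Nat.dvd_of_mul_dvd_mul_right hk hdvd
    exact ⟨g ^ s, by rw [← pow_mul, mul_comm]⟩

theorem PowerBasis.norm_algebraMap_add_gen {R S : Type*} [CommRing R] [CommRing S]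
    [Algebra R S] (pb : PowerBasis R S) (a : R) :
    Algebra.norm R (algebraMap R S a + pb.gen) =
      (-1) ^ pb.dim * (minpoly R pb.gen).eval (-a) := by
  rw [← charpoly_leftMulMatrix, Matrix.eval_charpoly, Algebra.norm_eq_matrix_det pb.basis,
    map_add, AlgHom.commutes, map_neg, ← neg_add', Matrix.det_neg, Fintype.card_fin,
    ← mul_assoc, ← pow_add, Even.neg_one_pow ⟨_, rfl⟩, one_mul]
  rfl

theorem Polynomial.irreducible_map_sub_C_of_irreducible_comp {K L : Type*} [Field K] [Field L]
    [Algebra K L] [FiniteDimensional K L] {f g : K[X]} {β : L} (hL : finrank K L = f.natDegree)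
    (hβ : aeval β f = 0) (hfm : f.Monic) (hgm : g.Monic) (hg : g.natDegree ≠ 0)
    (hfg : Irreducible (f.comp g)) : Irreducible (g.map (algebraMap K L) - C β) := by
  set G := g.map (algebraMap K L) - C β
  have hGdeg : G.natDegree = g.natDegree := by rw [natDegree_sub_C, natDegree_map]
  have hGm : G.Monic := (hgm.map _).sub_of_left <| degree_C_le.trans_lt <| by
    rw [degree_map]
    exact natDegree_pos_iff_degree_pos.mp (Nat.pos_of_ne_zero hg)
  have hGu : ¬ IsUnit G := fun h => hg (hGdeg ▸ natDegree_eq_zero_of_isUnit h)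
  obtain ⟨p, hp, hpG⟩ := WfDvdMonoid.exists_irreducible_factor hGu hGm.ne_zero
  refine (associated_of_dvd_of_natDegree_le hpG hGm.ne_zero ?_).irreducible hp
  have := Fact.mk hp
  let pb := AdjoinRoot.powerBasis hp.ne_zero
  have : FiniteDimensional L (AdjoinRoot p) := pb.finite
  have : FiniteDimensional K (AdjoinRoot p) := .trans K L _
  let α := AdjoinRoot.root p
  have hGα : aeval α G = 0 :=
    aeval_eq_zero_of_dvd_aeval_eq_zero hpG (AdjoinRoot.aeval_eq p ▸ AdjoinRoot.mk_self)
  have hgα : aeval α g = algebraMap L _ β := by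
    rwa [map_sub, aeval_C, sub_eq_zero, aeval_map_algebraMap] at hGα
  have hfgα : aeval α (f.comp g) = 0 := by
    rw [aeval_comp, hgα, aeval_algebraMap_apply, hβ, map_zero]
  have hmin := minpoly.eq_of_irreducible_of_monic hfg hfgα (hfm.comp hgm hg)
  have hdeg : f.natDegree * g.natDegree ≤ f.natDegree * p.natDegree :=
    calc f.natDegree * g.natDegree = (f.comp g).natDegree := natDegree_comp.symm
    _ ≤ finrank K (AdjoinRoot p) := hmin ▸ minpoly.natDegree_le α
    _ = f.natDegree * p.natDegree := by
      rw [← finrank_mul_finrank K L, hL, pb.finrank, AdjoinRoot.powerBasis_dim]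
  rw [hGdeg]
  exact Nat.le_of_mul_le_mul_left hdeg (hL ▸ finrank_pos)

namespace FiniteField

variable {F L : Type*} [Field F] [Field L] [Algebra F L]

theorem exists_pow_eq_iff_pow_eq_one [Finite F] {l k : ℕ} (hF : Nat.card F - 1 = l * k) {x : F}
    (hx : x ≠ 0) : (∃ y, y ^ l = x) ↔ x ^ k = 1 := by
  have hl : l ≠ 0 := by
    rintro rfl
    have := Finite.one_lt_card (α := F)
    omega
  have := IsCyclic.exists_pow_eq_iff_pow_eq_one (G := Fˣ) (by rw [Nat.card_units, hF])
    (Units.mk0 x hx)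
  simp only [Units.ext_iff, Units.val_pow_eq_pow_val, Units.val_mk0, Units.val_one,
    Units.exists_iff_ne_zero (p := fun y => y ^ l = x)] at this
  rw [← this]
  exact ⟨fun ⟨y, hy⟩ => ⟨y, fun h => hx (by rw [← hy, h, zero_pow hl]), hy⟩,
    fun ⟨y, _, hy⟩ => ⟨y, hy⟩⟩

theorem exists_pow_eq_of_not_dvd [Finite F] {l : ℕ} (hl : l.Prime)
    (hlF : ¬ l ∣ Nat.card F - 1) (x : F) : ∃ y, y ^ l = x := by
  have := Fintype.ofFinite F
  rcases eq_or_ne x 0 with rfl | hx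
  · exact ⟨0, zero_pow hl.ne_zero⟩
  have hord : orderOf x ∣ Nat.card F - 1 := by
    rw [Nat.card_eq_fintype_card]
    exact orderOf_dvd_of_pow_eq_one (pow_card_sub_one_eq_one x hx)
  obtain ⟨m, hm⟩ := exists_pow_eq_self_of_coprime
    (((Nat.Prime.coprime_iff_not_dvd hl).2 hlF).coprime_dvd_right hord)
  exact ⟨x ^ m, by rw [← pow_mul, mul_comm, pow_mul, hm]⟩

variable (F L) in
theorem card_sub_one_dvd_card_sub_one [Finite L] : Nat.card F - 1 ∣ Nat.card L - 1 := by
  rw [natCard_eq_pow_finrank (K := F) (V := L)]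
  exact Nat.sub_one_dvd_pow_sub_one _ _

theorem exists_pow_eq_iff_exists_pow_eq_norm [Finite L] {l : ℕ} (hl : l ∣ Nat.card F - 1)
    (x : L) : (∃ y : L, y ^ l = x) ↔ ∃ c : F, c ^ l = Algebra.norm F x := by
  have := Finite.of_injective _ (algebraMap F L).injective
  refine ⟨fun ⟨y, hy⟩ => ⟨Algebra.norm F y, by rw [← map_pow, hy]⟩, fun hc => ?_⟩
  rcases eq_or_ne x 0 with rfl | hx
  · refine ⟨0, zero_pow fun hl0 => ?_⟩
    have := Finite.one_lt_card (α := F)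
    rw [hl0, zero_dvd_iff] at hl
    omega
  obtain ⟨k, hk⟩ := hl
  set s := (Nat.card L - 1) / (Nat.card F - 1)
  have hL : Nat.card L - 1 = l * (k * s) := by
    rw [← mul_assoc, ← hk, Nat.mul_div_cancel' (card_sub_one_dvd_card_sub_one F L)]
  rw [exists_pow_eq_iff_pow_eq_one hL hx, pow_mul', ← algebraMap_norm_eq_pow,
    ← map_pow, (exists_pow_eq_iff_pow_eq_one hk (Algebra.norm_ne_zero_iff.2 hx)).1 hc, map_one]

theorem irreducible_X_pow_sub_C_iff [Finite F] {d : ℕ} (hd4 : ¬ 4 ∣ d)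
    (hdF : ∀ l : ℕ, l.Prime → l ∣ d → l ∣ Nat.card F - 1) (c : F) :
    Irreducible (X ^ d - C c) ↔ ∀ l : ℕ, l.Prime → l ∣ d → ¬ ∃ b, b ^ l = c := by
  refine ⟨fun H l hl hld ⟨b, hb⟩ => pow_ne_of_irreducible_X_pow_sub_C H hld hl.ne_one b hb,
    fun H => ?_⟩
  rcases Nat.even_or_odd d with ⟨r, rfl⟩ | hd
  swap
  · exact X_pow_sub_C_irreducible_of_odd hd fun l hl hld b hb => H l hl hld ⟨b, hb⟩
  -- Adjoin a square root `x` of `c`: its norm is `-c`, an `l`-th power iff `c` is, for odd `l`.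
  have hr : Odd r := Nat.not_even_iff_odd.1 fun ⟨s, hs⟩ => hd4 ⟨s, by omega⟩
  have hdvd : ∀ {l : ℕ}, l ∣ r → l ∣ r + r := fun h => h.trans ⟨2, by ring⟩
  rw [← two_mul, mul_comm]
  refine X_pow_mul_sub_C_irreducible (X_pow_sub_C_irreducible_of_prime Nat.prime_two
    fun b hb => H 2 Nat.prime_two ⟨r, (two_mul r).symm⟩ ⟨b, hb⟩) fun E _ _ x hx => ?_
  have hx0 : IsIntegral F x := by
    by_contra h
    rw [minpoly.eq_zero h] at hx
    exact X_pow_sub_C_ne_zero two_pos c hx.symm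
  let pb := adjoin.powerBasis hx0
  have : Module.Finite F F⟮x⟯ := pb.finite
  have : Finite F⟮x⟯ := Module.finite_of_finite F
  have hnorm : Algebra.norm F (AdjoinSimple.gen F x) = -c := by
    have := pb.norm_algebraMap_add_gen 0
    rw [adjoin.powerBasis_gen, adjoin.powerBasis_dim, minpoly_gen, hx] at this
    simpa using this
  refine X_pow_sub_C_irreducible_of_odd hr fun l hl hlr b hb => ?_
  obtain ⟨e, he⟩ := (exists_pow_eq_iff_exists_pow_eq_norm (hdF l hl (hdvd hlr)) _).1 ⟨b, hb⟩
  exact H l hl (hdvd hlr) ⟨-e, by rw [(hr.of_dvd_nat hlr).neg_pow, he, hnorm, neg_neg]⟩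

theorem irreducible_X_pow_sub_C_algebraMap_add_gen_iff [Finite F] (pb : PowerBasis F L) {d : ℕ}
    (hd4 : ¬ 4 ∣ d) (hdF : ∀ l : ℕ, l.Prime → l ∣ d → l ∣ Nat.card F - 1) (a : F) :
    Irreducible (X ^ d - C (algebraMap F L a + pb.gen)) ↔
      ∀ l : ℕ, l.Prime → l ∣ d →
        ¬ ∃ b : F, b ^ l = (-1) ^ pb.dim * (minpoly F pb.gen).eval (-a) := by
  have : Module.Finite F L := pb.finite
  have : Finite L := Module.finite_of_finite F
  rw [irreducible_X_pow_sub_C_iff hd4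
    fun l hl hld => (hdF l hl hld).trans (card_sub_one_dvd_card_sub_one F L)]
  refine forall₃_congr fun l hl hld => not_congr ?_
  rw [exists_pow_eq_iff_exists_pow_eq_norm (hdF l hl hld), pb.norm_algebraMap_add_gen]

theorem irreducible_comp_X_pow_sub_C_iff [Finite F] {d : ℕ} (hd4 : ¬ 4 ∣ d)
    (hdF : ∀ l : ℕ, l.Prime → l ∣ d → l ∣ Nat.card F - 1) (a : F) {h : F[X]} (hm : h.Monic)
    (hirr : Irreducible h) :
    Irreducible (h.comp (X ^ d - C a)) ↔
      ∀ l : ℕ, l.Prime → l ∣ d → ¬ ∃ b : F, b ^ l = (-1) ^ h.natDegree * h.eval (-a) := by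
  have hd : d ≠ 0 := by rintro rfl; exact hd4 (dvd_zero 4)
  have hmap : ∀ {E : Type _} [Field E] [Algebra F E] (β : E),
      (X ^ d - C a).map (algebraMap F E) - C β = X ^ d - C (algebraMap F E a + β) := by
    intros
    simp [sub_sub]
  constructor
  · intro H
    have := Fact.mk hirr
    let pb := AdjoinRoot.powerBasis hirr.ne_zero
    have : FiniteDimensional F (AdjoinRoot h) := pb.finite
    have hK := irreducible_map_sub_C_of_irreducible_comp (β := AdjoinRoot.root h)
      (by rw [pb.finrank, AdjoinRoot.powerBasis_dim]) (AdjoinRoot.aeval_eq h ▸ AdjoinRoot.mk_self)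
      hm (monic_X_pow_sub_C a hd) (by rwa [natDegree_X_pow_sub_C]) H
    have hmin : minpoly F (AdjoinRoot.root h) = h := by
      rw [AdjoinRoot.minpoly_root hirr.ne_zero, hm.leadingCoeff, inv_one, C_1, mul_one]
    rw [hmap, ← AdjoinRoot.powerBasis_gen hirr.ne_zero] at hK
    simpa [pb, hmin] using (irreducible_X_pow_sub_C_algebraMap_add_gen_iff pb hd4 hdF a).1 hK
  · intro H
    refine irreducible_comp hm (monic_X_pow_sub_C a hd) hirr fun E _ _ x hx => ?_
    have hx0 : IsIntegral F x := by
      by_contra hx0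
      rw [minpoly.eq_zero hx0] at hx
      exact hirr.ne_zero hx.symm
    rw [hmap, ← adjoin.powerBasis_gen hx0,
      irreducible_X_pow_sub_C_algebraMap_add_gen_iff _ hd4 hdF]
    rwa [adjoin.powerBasis_gen, adjoin.powerBasis_dim, minpoly_gen, hx]

end FiniteField

section Iterates

variable {F : Type*} [Field F]

theorem iter_succ' (f : F[X]) (n : ℕ) : iter f (n + 1) = f.comp (iter f n) := by
  induction n with
  | zero => exact X_comp.trans comp_X.symm
  | succ n ih => exact (congrArg (·.comp f) ih).trans (comp_assoc _ _ _)

theorem monic_iter_X_pow_sub_C {d : ℕ} (hd : d ≠ 0) (a : F) (n : ℕ) :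
    (iter (X ^ d - C a) n).Monic := by
  induction n with
  | zero => exact monic_X
  | succ n ih => exact ih.comp (monic_X_pow_sub_C a hd) (by rwa [natDegree_X_pow_sub_C])

theorem natDegree_iter_X_pow_sub_C (d : ℕ) (a : F) (n : ℕ) :
    (iter (X ^ d - C a) n).natDegree = d ^ n := by
  induction n with
  | zero => exact natDegree_X
  | succ n ih => rw [iter, natDegree_comp, ih, natDegree_X_pow_sub_C, pow_succ]

theorem P_succ {d : ℕ} (a : F) {n : ℕ} (hn : 0 < n) :
    P d a (n + 1) = P d a n ^ d + (-1) ^ (d - 1) * a := by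
  obtain ⟨n, rfl⟩ := Nat.exists_eq_add_of_lt hn
  rfl

theorem neg_one_pow_pow_succ {R : Type*} [Monoid R] [HasDistribNeg R] (d n : ℕ) :
    (-1 : R) ^ d ^ (n + 1) = (-1) ^ d := by
  rcases Nat.even_or_odd d with h | h
  · rw [h.neg_one_pow, (h.pow_of_ne_zero n.succ_ne_zero).neg_one_pow]
  · rw [h.neg_one_pow, h.pow.neg_one_pow]

theorem P_succ_eq_eval_iter {d : ℕ} (hd : d ≠ 0) (a : F) (n : ℕ) :
    P d a (n + 1) = (-1) ^ d ^ n * (iter (X ^ d - C a) n).eval (-a) := by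
  induction n with
  | zero => simp [P, iter]
  | succ n ih =>
    obtain ⟨e, rfl⟩ : ∃ e, d = e + 1 := ⟨d - 1, by omega⟩
    rw [P_succ a n.succ_pos, ih, iter_succ', eval_comp, mul_pow, ← pow_mul, ← pow_succ,
      neg_one_pow_pow_succ]
    simp only [eval_sub, eval_pow, eval_X, eval_C, Nat.add_sub_cancel, pow_succ (-1 : F) e]
    ring

theorem P_add_eq_P_add_of_eq {d : ℕ} {a : F} {n m : ℕ} (hn : 0 < n) (hm : 0 < m)
    (h : P d a n = P d a m) (j : ℕ) : P d a (n + j) = P d a (m + j) := by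
  induction j with
  | zero => exact h
  | succ j ih => rw [← add_assoc, ← add_assoc, P_succ a (by omega), P_succ a (by omega), ih]

theorem exists_lt_P_eq_of_P_eq {d : ℕ} {a : F} {n₀ m₀ : ℕ} (hn₀ : 0 < n₀) (hlt : n₀ < m₀)
    (heq : P d a n₀ = P d a m₀) {k : ℕ} (hk : 0 < k) :
    ∃ k', 0 < k' ∧ k' < m₀ ∧ P d a k = P d a k' := by
  induction k using Nat.strong_induction_on with
  | _ k ih =>
    by_cases hkm : k < m₀
    · exact ⟨k, hk, hkm, rfl⟩
    obtain ⟨j, rfl⟩ := Nat.exists_eq_add_of_le (not_lt.1 hkm)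
    rw [← P_add_eq_P_add_of_eq hn₀ (by omega) heq j]
    exact ih (n₀ + j) (by omega) (by omega)

theorem irreducible_iter_X_pow_sub_C_iff [Finite F] {d : ℕ} (hd4 : ¬ 4 ∣ d)
    (hdF : ∀ l : ℕ, l.Prime → l ∣ d → l ∣ Nat.card F - 1) (a : F) :
    (∀ n, Irreducible (iter (X ^ d - C a) n)) ↔
      ∀ k, ∀ l : ℕ, l.Prime → l ∣ d → ¬ ∃ b : F, b ^ l = P d a (k + 1) := by
  have hd : d ≠ 0 := by rintro rfl; exact hd4 (dvd_zero 4)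
  have key : ∀ N, (∀ n < N + 1, Irreducible (iter (X ^ d - C a) n)) ↔
      ∀ k < N, ∀ l : ℕ, l.Prime → l ∣ d → ¬ ∃ b : F, b ^ l = P d a (k + 1) := by
    intro N
    induction N with
    | zero => simpa [iter] using irreducible_X
    | succ N ih =>
      rw [Nat.forall_lt_succ_right (n := N + 1), ih, Nat.forall_lt_succ_right (n := N)]
      refine and_congr_right fun hN => ?_
      rw [iter, FiniteField.irreducible_comp_X_pow_sub_C_iff hd4 hdF a
        (monic_iter_X_pow_sub_C hd a N) (ih.2 hN N N.lt_succ_self), natDegree_iter_X_pow_sub_C,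
        P_succ_eq_eval_iter hd]
  exact ⟨fun H k => (key (k + 1)).1 (fun n _ => H n) k k.lt_succ_self,
    fun H n => (key n).2 (fun k _ => H k) n n.lt_succ_self⟩

end Iterates

theorem stmt17_general (d n₀ m₀ : ℕ) (hd4 : ¬ (4 ∣ d))
    (F : Type*) [Field F] [Fintype F]
    (a : F)
    (hn₀ : 1 ≤ n₀) (hlt : n₀ < m₀) (heq : P d a n₀ = P d a m₀) :
    (∀ n : ℕ, 1 ≤ n → Irreducible (iter (X ^ d - C a : F[X]) n)) ↔
      (∀ l : ℕ, l.Prime → l ∣ d → ∀ k : ℕ, 1 ≤ k → k ≤ m₀ - 1 →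
        P d a k ≠ 0 ∧ ¬ ∃ b : F, b ^ l = P d a k) := by
  by_cases hdF : ∀ l : ℕ, l.Prime → l ∣ d → l ∣ Nat.card F - 1
  · have hstable : (∀ n : ℕ, 1 ≤ n → Irreducible (iter (X ^ d - C a : F[X]) n)) ↔
        ∀ n, Irreducible (iter (X ^ d - C a : F[X]) n) :=
      ⟨fun H n => n.eq_zero_or_pos.elim (· ▸ irreducible_X) (H n), fun H n _ => H n⟩
    rw [hstable, irreducible_iter_X_pow_sub_C_iff hd4 hdF a]
    constructor
    · intro H l hl hld k hk _
      obtain ⟨k, rfl⟩ := Nat.exists_eq_add_of_le' hk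
      exact ⟨fun h0 => H k l hl hld ⟨0, by rw [h0, zero_pow hl.ne_zero]⟩, H k l hl hld⟩
    · intro H k l hl hld
      obtain ⟨k', hk', hk'm, hP⟩ := exists_lt_P_eq_of_P_eq hn₀ hlt heq k.succ_pos
      rw [hP]
      exact (H l hl hld k' hk' (by omega)).2
  · push Not at hdF
    obtain ⟨l, hl, hld, hlF⟩ := hdF
    obtain ⟨b, hb⟩ := FiniteField.exists_pow_eq_of_not_dvd hl hlF a
    refine iff_of_false (fun H => ?_) (fun H => (H l hl hld 1 le_rfl (by omega)).2 ⟨b, hb⟩)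
    have h1 : Irreducible (X ^ d - C a) := by simpa [iter] using H 1 le_rfl
    exact pow_ne_of_irreducible_X_pow_sub_C h1 hld hl.ne_one b hb

theorem stmt17 (q d n₀ m₀ : ℕ) (hd : 2 ≤ d) (hd4 : ¬ (4 ∣ d))
    (F : Type*) [Field F] [Fintype F] (hF : Fintype.card F = q)
    (a : F) (ha : a ≠ 0)
    (hn₀ : 1 ≤ n₀) (hlt : n₀ < m₀) (heq : P d a n₀ = P d a m₀)
    (hn₀min : ∀ n m : ℕ, 1 ≤ n → n < m → P d a n = P d a m → n₀ ≤ n)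
    (hm₀min : ∀ m : ℕ, n₀ < m → P d a n₀ = P d a m → m₀ ≤ m) :
    (∀ n : ℕ, 1 ≤ n → Irreducible (iter (X ^ d - C a : F[X]) n)) ↔
      (∀ l : ℕ, l.Prime → l ∣ d → ∀ k : ℕ, 1 ≤ k → k ≤ m₀ - 1 →
        P d a k ≠ 0 ∧ ¬ ∃ b : F, b ^ l = P d a k) :=
  stmt17_general d n₀ m₀ hd4 F a hn₀ hlt heq
end
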